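/- arXiv:quant-ph/0512075 — 4 statements merged into one kernel-verified Lean document; each statement's English description precedes it below -/
import Mathlib

section
/- For the sequence of coefficients a_{n,k}(u) = √(C(2j_n, k)) (sin(u/√n))^k (cos(u/√n))^{2j_n−k} with j_n = ⌊(μ−1/2)n⌋ and μ ∈ (1/2, 1], for each fixed k ∈ ℕ and u > 0, a_{n,k}(u) converges as n → ∞ to e^{−(2μ−1)u²/2} (u√(2μ−1))^k / √(k!). -/
/-!
Squared, the coefficient is the binomial weight `C(m, k) p^k (1 - p)^(m - k)` with
`m = 2 j_n` trials and success probability `p = sin² (u / √n)`. Since `m ~ (2μ - 1) n`, the mean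
`m p` tends to `λ = (2μ - 1) u²`, so the Poisson limit theorem turns the weight into
`e^{-λ} λ^k / k!`; the coefficient is its nonnegative square root.
-/

open Filter Topology Asymptotics

section

variable {α : Type*} {l : Filter α}

lemma tendsto_zero_of_tendsto_mul_of_tendsto_atTop {m g : α → ℝ} {L : ℝ}
    (hm : Tendsto m l atTop) (hmg : Tendsto (fun x => m x * g x) l (𝓝 L)) :
    Tendsto g l (𝓝 0) := by
  refine (hmg.div_atTop hm).congr' ?_
  filter_upwards [hm.eventually_gt_atTop 0] with x hx
  field_simp

lemma tendsto_mul_comp_of_hasDerivAt_zero {f : ℝ → ℝ} {f' : ℝ} (hf : HasDerivAt f f' 0)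
    (hf0 : f 0 = 0) {m g : α → ℝ} {L : ℝ} (hg : Tendsto g l (𝓝 0))
    (hmg : Tendsto (fun x => m x * g x) l (𝓝 L)) :
    Tendsto (fun x => m x * f (g x)) l (𝓝 (L * f')) := by
  have hslope : Tendsto (fun x => dslope f 0 (g x)) l (𝓝 f') := by
    have := (continuousAt_dslope_same.2 hf.differentiableAt).tendsto.comp hg
    rwa [dslope_same, hf.deriv] at this
  refine (hmg.mul hslope).congr fun x => ?_
  -- `f y = y * dslope f 0 y`, because `f 0 = 0`
  have := sub_smul_dslope f 0 (g x)
  simp only [sub_zero, smul_eq_mul, hf0] at this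
  simp only [mul_assoc, this]

lemma tendsto_one_sub_pow_of_tendsto_mul {m : α → ℕ} {p : α → ℝ} {L : ℝ}
    (hp : Tendsto p l (𝓝 0)) (hmp : Tendsto (fun x => (m x : ℝ) * p x) l (𝓝 L)) :
    Tendsto (fun x => (1 - p x) ^ m x) l (𝓝 (Real.exp (-L))) := by
  have hlog : HasDerivAt (fun y => Real.log (1 + y)) 1 0 := by
    simpa using ((hasDerivAt_id (0 : ℝ)).const_add 1).log (by simp)
  have hexp := tendsto_mul_comp_of_hasDerivAt_zero (m := fun x => (m x : ℝ)) hlog (by simp)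
    (by simpa using hp.neg) (by simpa only [mul_neg] using hmp.neg)
  rw [mul_one] at hexp
  refine ((Real.continuous_exp.tendsto _).comp hexp).congr' ?_
  filter_upwards [hp.eventually_lt_const one_pos] with x hx
  rw [Function.comp_apply, Real.exp_nat_mul, ← sub_eq_add_neg, Real.exp_log (by linarith)]

lemma tendsto_choose_mul_pow_of_tendsto_mul (k : ℕ) {m : α → ℕ} (hm : Tendsto m l atTop)
    {p : α → ℝ} {L : ℝ} (hmp : Tendsto (fun x => (m x : ℝ) * p x) l (𝓝 L)) :
    Tendsto (fun x => ((m x).choose k : ℝ) * p x ^ k) l (𝓝 (L ^ k / k.factorial)) := by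
  have hequiv : (fun x => ((m x).choose k : ℝ) * p x ^ k)
      ~[l] fun x => ((m x : ℝ) * p x) ^ k / k.factorial :=
    (((isEquivalent_choose k).comp_tendsto hm).mul IsEquivalent.refl).congr_right
      (.of_eq (by ext; simp only [Function.comp_apply, Pi.mul_apply]; ring))
  exact hequiv.tendsto_nhds_iff.2 ((hmp.pow k).div_const _)

/-- The Poisson limit theorem. Unlike in
`ProbabilityTheory.tendsto_choose_mul_pow_of_tendsto_mul_atTop`, the number of trials `m` is any
function tending to infinity, not the index itself. -/
theorem tendsto_choose_mul_pow_mul_one_sub_pow_of_tendsto_mul (k : ℕ) {m : α → ℕ}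
    (hm : Tendsto m l atTop) {p : α → ℝ} {L : ℝ}
    (hmp : Tendsto (fun x => (m x : ℝ) * p x) l (𝓝 L)) :
    Tendsto (fun x => ((m x).choose k : ℝ) * p x ^ k * (1 - p x) ^ (m x - k)) l
      (𝓝 (Real.exp (-L) * L ^ k / k.factorial)) := by
  have hp := tendsto_zero_of_tendsto_mul_of_tendsto_atTop
    (tendsto_natCast_atTop_atTop.comp hm) hmp
  have hden : Tendsto (fun x => (1 - p x) ^ k) l (𝓝 1) := by
    simpa using ((tendsto_const_nhds (x := (1 : ℝ))).sub hp).pow k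
  have hpow : Tendsto (fun x => (1 - p x) ^ m x * ((1 - p x) ^ k)⁻¹) l (𝓝 (Real.exp (-L))) := by
    simpa using (tendsto_one_sub_pow_of_tendsto_mul hp hmp).mul (hden.inv₀ one_ne_zero)
  rw [show Real.exp (-L) * L ^ k / k.factorial = L ^ k / k.factorial * Real.exp (-L) by ring]
  refine ((tendsto_choose_mul_pow_of_tendsto_mul k hm hmp).mul hpow).congr' ?_
  filter_upwards [hm.eventually_ge_atTop k, hp.eventually_lt_const one_pos] with x hk hx
  rw [pow_sub₀ _ (by linarith) hk]

theorem tendsto_sqrt_choose_mul_sin_pow_mul_cos_pow [l.NeBot] (k : ℕ) {m : α → ℕ}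
    (hm : Tendsto m l atTop) {t : α → ℝ} (ht : ∀ᶠ x in l, 0 ≤ t x) {s : ℝ}
    (hmt : Tendsto (fun x => √(m x : ℝ) * t x) l (𝓝 s)) :
    Tendsto (fun x => √((m x).choose k : ℝ) * Real.sin (t x) ^ k * Real.cos (t x) ^ (m x - k))
      l (𝓝 (Real.exp (-s ^ 2 / 2) * s ^ k / √(k.factorial : ℝ))) := by
  have hs : 0 ≤ s := ge_of_tendsto hmt (by filter_upwards [ht] with x hx; positivity)
  have ht0 : Tendsto t l (𝓝 0) := tendsto_zero_of_tendsto_mul_of_tendsto_atTop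
    (Real.tendsto_sqrt_atTop.comp (tendsto_natCast_atTop_atTop.comp hm)) hmt
  have hsin : Tendsto (fun x => √(m x : ℝ) * Real.sin (t x)) l (𝓝 s) := by
    simpa using tendsto_mul_comp_of_hasDerivAt_zero (Real.hasDerivAt_sin 0) Real.sin_zero ht0 hmt
  have hmean : Tendsto (fun x => (m x : ℝ) * Real.sin (t x) ^ 2) l (𝓝 (s ^ 2)) := by
    refine (hsin.pow 2).congr fun x => ?_
    rw [mul_pow, Real.sq_sqrt (Nat.cast_nonneg _)]
  have hlimit : √(Real.exp (-s ^ 2) * (s ^ 2) ^ k / k.factorial)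
      = Real.exp (-s ^ 2 / 2) * s ^ k / √(k.factorial : ℝ) := by
    rw [show Real.exp (-s ^ 2) * (s ^ 2) ^ k = (Real.exp (-s ^ 2 / 2) * s ^ k) ^ 2 by
        rw [mul_pow, ← Real.exp_nat_mul, ← pow_mul, ← pow_mul, mul_comm k 2]; push_cast; ring_nf,
      Real.sqrt_div' _ (Nat.cast_nonneg _), Real.sqrt_sq (by positivity)]
  rw [← hlimit]
  refine (tendsto_choose_mul_pow_mul_one_sub_pow_of_tendsto_mul k hm hmean).sqrt.congr' ?_
  filter_upwards [ht, ht0.eventually_lt_const (by positivity : (0 : ℝ) < Real.pi / 2)]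
    with x ht_nonneg ht_lt
  have hsin_nonneg : 0 ≤ Real.sin (t x) :=
    Real.sin_nonneg_of_nonneg_of_le_pi ht_nonneg (by linarith [Real.pi_pos])
  have hcos_nonneg : 0 ≤ Real.cos (t x) :=
    Real.cos_nonneg_of_mem_Icc ⟨by linarith [Real.pi_pos], ht_lt.le⟩
  rw [← Real.cos_sq', show ((m x).choose k : ℝ) * (Real.sin (t x) ^ 2) ^ k
      * (Real.cos (t x) ^ 2) ^ (m x - k)
      = (m x).choose k * (Real.sin (t x) ^ k * Real.cos (t x) ^ (m x - k)) ^ 2 by ring,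
    Real.sqrt_mul (Nat.cast_nonneg _), Real.sqrt_sq (by positivity), mul_assoc]

end

/-- Coefficients of the rotated highest-weight spin state converge to coherent state
amplitudes: with `j_n = ⌊(μ−1/2)n⌋`,
`√C(2j_n,k) sin(u/√n)^k cos(u/√n)^{2j_n−k} → e^{−(2μ−1)u²/2} (u√(2μ−1))^k/√(k!)`. -/
theorem spin_coherent_coefficients (μ u : ℝ) (hμ : μ ∈ Set.Ioc (1/2 : ℝ) 1)
    (hu : 0 < u) (k : ℕ) :
    Tendsto (fun n : ℕ =>
        Real.sqrt ((2 * Nat.floor ((μ - 1/2) * n)).choose k)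
          * Real.sin (u / Real.sqrt n) ^ k
          * Real.cos (u / Real.sqrt n) ^ (2 * Nat.floor ((μ - 1/2) * n) - k))
      atTop
      (nhds (Real.exp (-(2 * μ - 1) * u ^ 2 / 2) * (u * Real.sqrt (2 * μ - 1)) ^ k
        / Real.sqrt k.factorial)) := by
  have ha : 0 < μ - 1/2 := by linarith [hμ.1]
  have hfloor : Tendsto (fun n : ℕ => ⌊(μ - 1/2) * n⌋₊) atTop atTop :=
    tendsto_nat_floor_atTop.comp (tendsto_natCast_atTop_atTop.const_mul_atTop ha)
  have hm : Tendsto (fun n : ℕ => 2 * ⌊(μ - 1/2) * n⌋₊) atTop atTop :=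
    tendsto_atTop_mono (fun n => Nat.le_mul_of_pos_left _ two_pos) hfloor
  have hratio : Tendsto (fun n : ℕ => ((2 * ⌊(μ - 1/2) * n⌋₊ : ℕ) : ℝ) / n) atTop
      (𝓝 (2 * μ - 1)) := by
    have := ((tendsto_nat_floor_mul_div_atTop ha.le).comp tendsto_natCast_atTop_atTop).const_mul 2
    rw [show 2 * (μ - 1/2) = 2 * μ - 1 by ring] at this
    refine this.congr fun n => ?_
    simp only [Function.comp_apply]; push_cast; ring
  have hmt : Tendsto (fun n : ℕ => √((2 * ⌊(μ - 1/2) * n⌋₊ : ℕ) : ℝ) * (u / √n)) atTop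
      (𝓝 (u * √(2 * μ - 1))) := by
    refine (hratio.sqrt.const_mul u).congr fun n => ?_
    rw [Real.sqrt_div' _ (Nat.cast_nonneg _), mul_div_left_comm]
  convert tendsto_sqrt_choose_mul_sin_pow_mul_cos_pow k hm
    (Eventually.of_forall fun n => by positivity) hmt using 5
  rw [mul_pow, Real.sq_sqrt (by linarith)]
  ring
end

section
/- In the problem of discriminating two pure states ψ₊ and ψ₋ in a Hilbert space with overlap s = |⟨ψ₊|ψ₋⟩| < 1, the minimax error probability over two-outcome POVMs (M₋, M₊) with 0 ≤ M₊ ≤ 1, M₋ = 1 − M₊ equals (1 − √(1 − s²))/2; that is, inf_M max(⟨ψ₊, M₋ ψ₊⟩, ⟨ψ₋, M₊ ψ₋⟩) = (1 − √(1 − |⟨ψ₊|ψ₋⟩|²))/2. -/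
/-!
After multiplying `ψ₋` by a phase, the overlap `s = ⟪ψ₊, ψ₋⟫` is real and `ψ± = c e₁ ± d e₂` for an
orthonormal pair `e₁, e₂`, where `c = √((1 + s) / 2)` and `d = √((1 - s) / 2)`, so that
`c² + d² = 1` and `2 c d = √(1 - s²)`. For `0 ≤ M ≤ 1`, polarization gives
`⟪ψ₊, M ψ₊⟫ - ⟪ψ₋, M ψ₋⟫ = c d (⟪e₁ + e₂, M (e₁ + e₂)⟫ - ⟪e₁ - e₂, M (e₁ - e₂)⟫)`,
which is at most `c d ‖e₁ + e₂‖² = 2 c d`; so the two error probabilities add up to at least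
`1 - 2 c d`. The projection onto `(e₁ + e₂) / √2` makes both of them equal to `(1 - 2 c d) / 2`.
-/

open InnerProductSpace ContinuousLinearMap
open scoped InnerProductSpace

section

variable {𝕜 E : Type*} [RCLike 𝕜] [NormedAddCommGroup E] [InnerProductSpace 𝕜 E]

theorem exists_norm_eq_one_mul_norm (z : 𝕜) : ∃ u : 𝕜, ‖u‖ = 1 ∧ z = u * ‖z‖ := by
  rcases eq_or_ne z 0 with rfl | hz
  · exact ⟨1, norm_one, by simp⟩
  · have hz' : (‖z‖ : 𝕜) ≠ 0 := RCLike.ofReal_ne_zero.2 (norm_ne_zero_iff.2 hz)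
    refine ⟨z / ‖z‖, ?_, (div_mul_cancel₀ z hz').symm⟩
    rw [norm_div, RCLike.norm_ofReal, abs_norm, div_self (norm_ne_zero_iff.2 hz)]

theorem exists_orthonormal_of_inner_eq_ofReal {ψ φ : E} (hψ : ‖ψ‖ = 1) (hφ : ‖φ‖ = 1) {s : ℝ}
    (hψφ : ⟪ψ, φ⟫_𝕜 = s) (hs : |s| < 1) :
    ∃ e₁ e₂ : E, ‖e₁‖ = 1 ∧ ‖e₂‖ = 1 ∧ ⟪e₁, e₂⟫_𝕜 = 0 ∧
      ψ = ((√((1 + s) / 2) : ℝ) : 𝕜) • e₁ + ((√((1 - s) / 2) : ℝ) : 𝕜) • e₂ ∧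
      φ = ((√((1 + s) / 2) : ℝ) : 𝕜) • e₁ - ((√((1 - s) / 2) : ℝ) : 𝕜) • e₂ := by
  obtain ⟨hs₁, hs₂⟩ := abs_lt.1 hs
  have hre : RCLike.re ⟪ψ, φ⟫_𝕜 = s := by rw [hψφ, RCLike.ofReal_re]
  set c := √((1 + s) / 2)
  set d := √((1 - s) / 2)
  have hc : 0 < c := Real.sqrt_pos.2 (by linarith)
  have hd : 0 < d := Real.sqrt_pos.2 (by linarith)
  have hadd : ‖ψ + φ‖ = 2 * c := by
    rw [← sq_eq_sq₀ (norm_nonneg _) (by positivity), norm_add_sq (𝕜 := 𝕜), hre, hψ, hφ, mul_pow,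
      Real.sq_sqrt (by linarith)]
    ring
  have hsub : ‖ψ - φ‖ = 2 * d := by
    rw [← sq_eq_sq₀ (norm_nonneg _) (by positivity), norm_sub_sq (𝕜 := 𝕜), hre, hψ, hφ, mul_pow,
      Real.sq_sqrt (by linarith)]
    ring
  have hadd₀ : ψ + φ ≠ 0 := by
    rw [← norm_ne_zero_iff, hadd]; positivity
  have hsub₀ : ψ - φ ≠ 0 := by
    rw [← norm_ne_zero_iff, hsub]; positivity
  have horth : ⟪ψ + φ, ψ - φ⟫_𝕜 = 0 := by
    rw [inner_add_left, inner_sub_right, inner_sub_right, ← inner_conj_symm φ ψ, hψφ,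
      RCLike.conj_ofReal, inner_self_eq_norm_sq_to_K, inner_self_eq_norm_sq_to_K, hψ, hφ]
    ring
  have hhalf : ∀ a : ℝ, 0 < a → (a : 𝕜) * ((2 * a : ℝ) : 𝕜)⁻¹ = 2⁻¹ := by
    intro a ha
    have : (a : 𝕜) ≠ 0 := RCLike.ofReal_ne_zero.2 ha.ne'
    push_cast
    field_simp
  refine ⟨(‖ψ + φ‖⁻¹ : 𝕜) • (ψ + φ), (‖ψ - φ‖⁻¹ : 𝕜) • (ψ - φ), norm_smul_inv_norm hadd₀,
    norm_smul_inv_norm hsub₀, ?_, ?_, ?_⟩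
  · rw [inner_smul_left, inner_smul_right, horth, mul_zero, mul_zero]
  · rw [smul_smul, smul_smul, hadd, hsub, hhalf c hc, hhalf d hd]
    module
  · rw [smul_smul, smul_smul, hadd, hsub, hhalf c hc, hhalf d hd]
    module

theorem exists_orthonormal_of_norm_inner_lt_one {ψ φ : E} (hψ : ‖ψ‖ = 1) (hφ : ‖φ‖ = 1)
    (hs : ‖⟪ψ, φ⟫_𝕜‖ < 1) :
    ∃ (u : 𝕜) (e₁ e₂ : E), ‖u‖ = 1 ∧ ‖e₁‖ = 1 ∧ ‖e₂‖ = 1 ∧ ⟪e₁, e₂⟫_𝕜 = 0 ∧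
      ψ = ((√((1 + ‖⟪ψ, φ⟫_𝕜‖) / 2) : ℝ) : 𝕜) • e₁ + ((√((1 - ‖⟪ψ, φ⟫_𝕜‖) / 2) : ℝ) : 𝕜) • e₂ ∧
      φ = u • (((√((1 + ‖⟪ψ, φ⟫_𝕜‖) / 2) : ℝ) : 𝕜) • e₁
        - ((√((1 - ‖⟪ψ, φ⟫_𝕜‖) / 2) : ℝ) : 𝕜) • e₂) := by
  obtain ⟨u, hu, hphase⟩ := exists_norm_eq_one_mul_norm ⟪ψ, φ⟫_𝕜
  have hu₀ : u ≠ 0 := norm_ne_zero_iff.1 (hu ▸ one_ne_zero)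
  have hχ : ‖u⁻¹ • φ‖ = 1 := by rw [norm_smul, norm_inv, hu, hφ, inv_one, one_mul]
  have hψχ : ⟪ψ, u⁻¹ • φ⟫_𝕜 = ‖⟪ψ, φ⟫_𝕜‖ := by
    rw [inner_smul_right, inv_mul_eq_iff_eq_mul₀ hu₀]
    exact hphase
  obtain ⟨e₁, e₂, h₁, h₂, h₁₂, hψ', hφ'⟩ :=
    exists_orthonormal_of_inner_eq_ofReal hψ hχ hψχ (by rwa [abs_norm])
  exact ⟨u, e₁, e₂, hu, h₁, h₂, h₁₂, hψ', by rw [← hφ', smul_inv_smul₀ hu₀]⟩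

theorem inner_add_map_add_sub_inner_sub_map_sub (M : E →L[𝕜] E) (x y : E) :
    ⟪x + y, M (x + y)⟫_𝕜 - ⟪x - y, M (x - y)⟫_𝕜 = 2 * (⟪x, M y⟫_𝕜 + ⟪y, M x⟫_𝕜) := by
  simp only [map_add, map_sub, inner_add_left, inner_add_right, inner_sub_left, inner_sub_right]
  ring

theorem inner_smul_map_smul_of_norm_eq_one (M : E →L[𝕜] E) {u : 𝕜} (hu : ‖u‖ = 1) (x : E) :
    ⟪u • x, M (u • x)⟫_𝕜 = ⟪x, M x⟫_𝕜 := by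
  rw [map_smul, inner_smul_left, inner_smul_right, ← mul_assoc, RCLike.conj_mul, hu]
  simp

theorem re_inner_one_sub_map_self (M : E →L[𝕜] E) (x : E) :
    RCLike.re ⟪x, ((1 : E →L[𝕜] E) - M) x⟫_𝕜 = ‖x‖ ^ 2 - RCLike.re ⟪x, M x⟫_𝕜 := by
  rw [sub_apply, one_apply_eq_self, inner_sub_right, map_sub, inner_self_eq_norm_sq]

theorem re_inner_map_self_le {M : E →L[𝕜] E} (hM : (1 - M).IsPositive) (x : E) :
    RCLike.re ⟪x, M x⟫_𝕜 ≤ ‖x‖ ^ 2 := by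
  linarith [re_inner_one_sub_map_self M x, hM.re_inner_nonneg_right x]

theorem re_inner_rankOne_self_apply (f x : E) :
    RCLike.re ⟪x, rankOne 𝕜 f f x⟫_𝕜 = ‖⟪f, x⟫_𝕜‖ ^ 2 := by
  rw [inner_right_rankOne_apply, ← inner_conj_symm, RCLike.conj_mul, ← RCLike.ofReal_pow,
    RCLike.ofReal_re]

theorem norm_ofReal_smul_add_ofReal_smul_sq {e₁ e₂ : E} (h₁ : ‖e₁‖ = 1) (h₂ : ‖e₂‖ = 1)
    (h₁₂ : ⟪e₁, e₂⟫_𝕜 = 0) (c d : ℝ) : ‖(c : 𝕜) • e₁ + (d : 𝕜) • e₂‖ ^ 2 = c ^ 2 + d ^ 2 := by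
  rw [norm_add_sq (𝕜 := 𝕜), inner_smul_left, inner_smul_right, h₁₂, norm_smul, norm_smul, h₁, h₂,
    RCLike.norm_ofReal, RCLike.norm_ofReal]
  simp

theorem re_inner_map_sub_re_inner_map_le {M : E →L[𝕜] E} (hM : M.IsPositive)
    (hM' : (1 - M).IsPositive) {e₁ e₂ : E} (h₁ : ‖e₁‖ = 1) (h₂ : ‖e₂‖ = 1)
    (h₁₂ : ⟪e₁, e₂⟫_𝕜 = 0) {c d : ℝ} (hcd : 0 ≤ c * d) :
    RCLike.re ⟪(c : 𝕜) • e₁ + (d : 𝕜) • e₂, M ((c : 𝕜) • e₁ + (d : 𝕜) • e₂)⟫_𝕜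
      - RCLike.re ⟪(c : 𝕜) • e₁ - (d : 𝕜) • e₂, M ((c : 𝕜) • e₁ - (d : 𝕜) • e₂)⟫_𝕜
      ≤ 2 * (c * d) := by
  have hscale : ⟪(c : 𝕜) • e₁ + (d : 𝕜) • e₂, M ((c : 𝕜) • e₁ + (d : 𝕜) • e₂)⟫_𝕜
      - ⟪(c : 𝕜) • e₁ - (d : 𝕜) • e₂, M ((c : 𝕜) • e₁ - (d : 𝕜) • e₂)⟫_𝕜
      = ((c * d : ℝ) : 𝕜) * (⟪e₁ + e₂, M (e₁ + e₂)⟫_𝕜 - ⟪e₁ - e₂, M (e₁ - e₂)⟫_𝕜) := by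
    simp only [inner_add_map_add_sub_inner_sub_map_sub, map_smul, inner_smul_left,
      inner_smul_right, RCLike.conj_ofReal, RCLike.ofReal_mul]
    ring
  have hnorm : ‖e₁ + e₂‖ ^ 2 = 2 := by
    rw [norm_add_sq (𝕜 := 𝕜), h₁₂, h₁, h₂]
    norm_num
  calc _ = c * d * (RCLike.re ⟪e₁ + e₂, M (e₁ + e₂)⟫_𝕜
          - RCLike.re ⟪e₁ - e₂, M (e₁ - e₂)⟫_𝕜) := by
        rw [← map_sub, hscale, RCLike.re_ofReal_mul, map_sub]
    _ ≤ c * d * (2 - 0) := by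
        gcongr
        · exact hnorm ▸ re_inner_map_self_le hM' _
        · exact hM.re_inner_nonneg_right _
    _ = 2 * (c * d) := by ring

noncomputable def worstError (ψ φ : E) (M : E →L[𝕜] E) : ℝ :=
  max (RCLike.re ⟪ψ, ((1 : E →L[𝕜] E) - M) ψ⟫_𝕜) (RCLike.re ⟪φ, M φ⟫_𝕜)

theorem le_worstError {e₁ e₂ : E} (h₁ : ‖e₁‖ = 1) (h₂ : ‖e₂‖ = 1) (h₁₂ : ⟪e₁, e₂⟫_𝕜 = 0)
    {u : 𝕜} (hu : ‖u‖ = 1) {c d : ℝ} (hcd : c ^ 2 + d ^ 2 = 1) (hcd₀ : 0 ≤ c * d)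
    {M : E →L[𝕜] E} (hM : M.IsPositive) (hM' : (1 - M).IsPositive) :
    (1 - 2 * (c * d)) / 2 ≤
      worstError ((c : 𝕜) • e₁ + (d : 𝕜) • e₂) (u • ((c : 𝕜) • e₁ - (d : 𝕜) • e₂)) M := by
  have hbias := re_inner_map_sub_re_inner_map_le hM hM' h₁ h₂ h₁₂ hcd₀
  rw [worstError, re_inner_one_sub_map_self, norm_ofReal_smul_add_ofReal_smul_sq h₁ h₂ h₁₂, hcd,
    inner_smul_map_smul_of_norm_eq_one M hu]
  by_contra! h
  obtain ⟨hplus, hminus⟩ := max_lt_iff.1 h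
  linarith

theorem exists_isPositive_worstError_eq [CompleteSpace E] {e₁ e₂ : E} (h₁ : ‖e₁‖ = 1)
    (h₂ : ‖e₂‖ = 1) (h₁₂ : ⟪e₁, e₂⟫_𝕜 = 0) {u : 𝕜} (hu : ‖u‖ = 1) {c d : ℝ}
    (hcd : c ^ 2 + d ^ 2 = 1) :
    ∃ P : E →L[𝕜] E, P.IsPositive ∧ (1 - P).IsPositive ∧
      worstError ((c : 𝕜) • e₁ + (d : 𝕜) • e₂) (u • ((c : 𝕜) • e₁ - (d : 𝕜) • e₂)) P
        = (1 - 2 * (c * d)) / 2 := by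
  have h₂₁ : ⟪e₂, e₁⟫_𝕜 = 0 := inner_eq_zero_symm.1 h₁₂
  have hsq : (√2) ^ 2 = 2 := Real.sq_sqrt zero_le_two
  set f : E := (((√2)⁻¹ : ℝ) : 𝕜) • (e₁ + e₂)
  have hf : ‖f‖ = 1 := by
    rw [← pow_eq_one_iff_of_nonneg (norm_nonneg _) two_ne_zero, norm_smul, mul_pow,
      norm_add_sq (𝕜 := 𝕜), h₁₂, h₁, h₂, RCLike.norm_ofReal, sq_abs, inv_pow, hsq]
    norm_num
  have hP := isStarProjection_rankOne_self (𝕜 := 𝕜) hf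
  refine ⟨rankOne 𝕜 f f, .of_isStarProjection hP, .of_isStarProjection hP.one_sub, ?_⟩
  have hfψ : ⟪f, (c : 𝕜) • e₁ + (d : 𝕜) • e₂⟫_𝕜 = (((c + d) / √2 : ℝ) : 𝕜) ∧
      ⟪f, (c : 𝕜) • e₁ - (d : 𝕜) • e₂⟫_𝕜 = (((c - d) / √2 : ℝ) : 𝕜) := by
    simp only [f, inner_smul_left, inner_smul_right, inner_add_left, inner_add_right,
      inner_sub_right, h₁₂, h₂₁, inner_self_eq_norm_sq_to_K, h₁, h₂, RCLike.conj_ofReal]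
    constructor <;> push_cast <;> ring
  rw [worstError, re_inner_one_sub_map_self, re_inner_rankOne_self_apply,
    inner_smul_map_smul_of_norm_eq_one _ hu, re_inner_rankOne_self_apply, hfψ.1, hfψ.2,
    norm_ofReal_smul_add_ofReal_smul_sq h₁ h₂ h₁₂, hcd, RCLike.norm_ofReal, RCLike.norm_ofReal,
    sq_abs, sq_abs, div_pow, div_pow, hsq]
  rw [show 1 - (c + d) ^ 2 / 2 = (1 - 2 * (c * d)) / 2 by linear_combination (-1 / 2 : ℝ) * hcd,
    show (c - d) ^ 2 / 2 = (1 - 2 * (c * d)) / 2 by linear_combination (1 / 2 : ℝ) * hcd, max_self]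

theorem isLeast_worstError [CompleteSpace E] {e₁ e₂ : E} (h₁ : ‖e₁‖ = 1) (h₂ : ‖e₂‖ = 1)
    (h₁₂ : ⟪e₁, e₂⟫_𝕜 = 0) {u : 𝕜} (hu : ‖u‖ = 1) {c d : ℝ} (hcd : c ^ 2 + d ^ 2 = 1)
    (hcd₀ : 0 ≤ c * d) {ψ φ : E} (hψ : ψ = (c : 𝕜) • e₁ + (d : 𝕜) • e₂)
    (hφ : φ = u • ((c : 𝕜) • e₁ - (d : 𝕜) • e₂)) :
    IsLeast {r : ℝ | ∃ M : E →L[𝕜] E, M.IsPositive ∧ (1 - M).IsPositive ∧ r = worstError ψ φ M}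
      ((1 - 2 * (c * d)) / 2) := by
  subst hψ hφ
  obtain ⟨P, hP, hP', hPerr⟩ := exists_isPositive_worstError_eq h₁ h₂ h₁₂ hu hcd
  refine ⟨⟨P, hP, hP', hPerr.symm⟩, ?_⟩
  rintro r ⟨M, hM, hM', rfl⟩
  exact le_worstError h₁ h₂ h₁₂ hu hcd hcd₀ hM hM'

end

/-- Helstrom bound: the minimax error probability for discriminating two pure states
with overlap `s = |⟨ψ₊|ψ₋⟩| < 1`, over two-outcome POVMs `(1 − M, M)`,
equals `(1 − √(1 − s²))/2`. -/
theorem pure_state_discrimination {H : Type*} [NormedAddCommGroup H]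
    [InnerProductSpace ℂ H] [CompleteSpace H]
    (ψp ψm : H) (hψp : ‖ψp‖ = 1) (hψm : ‖ψm‖ = 1)
    (hs : ‖(inner ℂ ψp ψm : ℂ)‖ < 1) :
    sInf {r : ℝ | ∃ M : H →L[ℂ] H, M.IsPositive ∧ (1 - M).IsPositive ∧
        r = max ((inner ℂ ψp (((1 : H →L[ℂ] H) - M) ψp) : ℂ)).re
                ((inner ℂ ψm (M ψm) : ℂ)).re}
      = (1 - Real.sqrt (1 - ‖(inner ℂ ψp ψm : ℂ)‖ ^ 2)) / 2 := by
  obtain ⟨u, e₁, e₂, hu, h₁, h₂, h₁₂, hψp', hψm'⟩ :=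
    exists_orthonormal_of_norm_inner_lt_one hψp hψm hs
  set s := ‖(inner ℂ ψp ψm : ℂ)‖
  have hs₀ : 0 ≤ s := norm_nonneg _
  have hcd : √((1 + s) / 2) ^ 2 + √((1 - s) / 2) ^ 2 = 1 := by
    rw [Real.sq_sqrt (by linarith), Real.sq_sqrt (by linarith)]
    ring
  have hsqrt : 2 * (√((1 + s) / 2) * √((1 - s) / 2)) = √(1 - s ^ 2) := by
    rw [← Real.sqrt_mul (by linarith), ← Real.sqrt_sq zero_le_two,
      ← Real.sqrt_mul (by positivity)]
    ring_nf
  rw [← hsqrt]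
  exact (isLeast_worstError h₁ h₂ h₁₂ hu hcd (by positivity) hψp' hψm').csInf_eq
end

section
/- For coherent states with real parameters ±u, the optimal discrimination risk (1 − √(1 − e^{−4u²}))/2 is strictly smaller than the risk 1/2 − erf(u) obtained from the optimal classical test on a Gaussian N(±u, 1/2) observation, for all u > 0, where erf(x) = ∫₀ˣ e^{−t²}/√π dt. -/
/-!
The square `[0, u]²` lies in the quarter disk of radius `√2 u`, so polar coordinates give
`(∫₀ᵘ e^{-t²} dt)² ≤ (π/4)(1 - e^{-2u²})`, i.e. `erf(u)² ≤ 1 - e^{-2u²}`. For `u > 0` this is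
strictly below `1 - e^{-4u²}`, and taking square roots rearranges into the claim.
-/

open Real MeasureTheory Set

lemma sq_intervalIntegral_eq_setIntegral_prod (f : ℝ → ℝ) {u : ℝ} (hu : 0 ≤ u) :
    (∫ t in 0..u, f t) ^ 2 = ∫ p in Ioc 0 u ×ˢ Ioc 0 u, f p.1 * f p.2 := by
  rw [intervalIntegral.integral_of_le hu, sq, Measure.volume_eq_prod, setIntegral_prod_mul]

lemma integral_mul_exp_neg_sq (R : ℝ) :
    ∫ r in 0..R, r * exp (-r ^ 2) = (1 - exp (-R ^ 2)) / 2 := by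
  have hderiv (r : ℝ) : HasDerivAt (fun r => -exp (-r ^ 2) / 2) (r * exp (-r ^ 2)) r :=
    ((hasDerivAt_pow 2 r).fun_neg.exp.fun_neg.div_const 2).congr_deriv (by norm_num; ring)
  rw [intervalIntegral.integral_eq_sub_of_hasDerivAt (fun r _ => hderiv r)
    (by apply Continuous.intervalIntegrable; fun_prop)]
  simp only [ne_eq, OfNat.ofNat_ne_zero, not_false_eq_true, zero_pow, neg_zero, exp_zero]
  ring

lemma mem_Icc_prod_of_polarCoord_symm_mem_Ioc_prod {u : ℝ} {p : ℝ × ℝ}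
    (hp : p ∈ polarCoord.target) (hs : polarCoord.symm p ∈ Ioc 0 u ×ˢ Ioc 0 u) :
    p ∈ Icc 0 (√2 * u) ×ˢ Icc 0 (π / 2) := by
  obtain ⟨r, θ⟩ := p
  simp only [polarCoord_target, mem_prod, mem_Ioi, mem_Ioo, polarCoord_symm_apply,
    mem_Ioc, mem_Icc] at hp hs ⊢
  obtain ⟨hr, hθl, hθr⟩ := hp
  obtain ⟨⟨hc, hcu⟩, hs, hsu⟩ := hs
  have hcos : 0 < cos θ := pos_of_mul_pos_right hc hr.le
  have hsin : 0 < sin θ := pos_of_mul_pos_right hs hr.le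
  refine ⟨⟨hr.le, ?_⟩, ?_, ?_⟩
  · have hr2 : r ^ 2 ≤ (√2 * u) ^ 2 := by
      rw [mul_pow, sq_sqrt zero_le_two]
      nlinarith [sin_sq_add_cos_sq θ]
    have hu : 0 ≤ u := by linarith
    exact (pow_le_pow_iff_left₀ hr.le (by positivity) two_ne_zero).1 hr2
  · by_contra! h
    exact (sin_neg_of_neg_of_neg_pi_lt h hθl).not_gt hsin
  · by_contra! h
    exact (cos_neg_of_pi_div_two_lt_of_lt h (by linarith)).not_gt hcos

lemma sq_integral_exp_neg_sq_le {u : ℝ} (hu : 0 ≤ u) :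
    (∫ t in 0..u, exp (-t ^ 2)) ^ 2 ≤ π / 4 * (1 - exp (-2 * u ^ 2)) := by
  set S := Ioc (0 : ℝ) u ×ˢ Ioc 0 u
  set B := Icc 0 (√2 * u) ×ˢ Icc 0 (π / 2)
  have hB : Integrable (B.indicator fun q : ℝ × ℝ => q.1 * exp (-q.1 ^ 2)) := by
    refine (ContinuousOn.integrableOn_compact (isCompact_Icc.prod isCompact_Icc) ?_)
      |>.integrable_indicator (measurableSet_Icc.prod measurableSet_Icc)
    fun_prop
  have hBnonneg : ∀ q ∈ B, 0 ≤ q.1 * exp (-q.1 ^ 2) := fun q hq => by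
    have := hq.1.1; positivity
  have hT : MeasurableSet polarCoord.target := polarCoord.open_target.measurableSet
  calc (∫ t in 0..u, exp (-t ^ 2)) ^ 2
      = ∫ p, S.indicator (fun q => exp (-q.1 ^ 2) * exp (-q.2 ^ 2)) p := by
        rw [sq_intervalIntegral_eq_setIntegral_prod _ hu,
          integral_indicator (measurableSet_Ioc.prod measurableSet_Ioc)]
    _ = ∫ p in polarCoord.target,
          p.1 • S.indicator (fun q => exp (-q.1 ^ 2) * exp (-q.2 ^ 2)) (polarCoord.symm p) :=
        (integral_comp_polarCoord_symm _).symm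
    _ ≤ ∫ p in polarCoord.target, B.indicator (fun q => q.1 * exp (-q.1 ^ 2)) p := by
        refine integral_mono_of_nonneg (ae_restrict_of_forall_mem hT fun p hp => ?_)
          hB.integrableOn (ae_restrict_of_forall_mem hT fun p hp => ?_)
        · exact smul_nonneg (le_of_lt hp.1) (indicator_nonneg (fun _ _ => by positivity) _)
        · dsimp only
          by_cases hs : polarCoord.symm p ∈ S
          · rw [indicator_of_mem hs,
              indicator_of_mem (mem_Icc_prod_of_polarCoord_symm_mem_Ioc_prod hp hs),
              polarCoord_symm_apply, smul_eq_mul, ← exp_add]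
            refine le_of_eq (congrArg (p.1 * exp ·) ?_)
            linear_combination (-p.1 ^ 2) * sin_sq_add_cos_sq p.2
          · rw [indicator_of_notMem hs, smul_zero]
            exact indicator_nonneg hBnonneg p
    _ ≤ ∫ p, B.indicator (fun q => q.1 * exp (-q.1 ^ 2)) p :=
        setIntegral_le_integral hB (ae_of_all _ (indicator_nonneg hBnonneg))
    _ = (∫ r in Icc 0 (√2 * u), r * exp (-r ^ 2)) * (π / 2) := by
        rw [integral_indicator (measurableSet_Icc.prod measurableSet_Icc), Measure.volume_eq_prod]
        simpa [max_eq_left (by positivity : (0 : ℝ) ≤ π / 2)] using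
          setIntegral_prod_mul (μ := volume) (ν := volume) (fun r : ℝ => r * exp (-r ^ 2))
            (fun _ : ℝ => (1 : ℝ)) (Icc 0 (√2 * u)) (Icc 0 (π / 2))
    _ = π / 4 * (1 - exp (-2 * u ^ 2)) := by
        rw [integral_Icc_eq_integral_Ioc, ← intervalIntegral.integral_of_le (by positivity),
          integral_mul_exp_neg_sq, mul_pow, sq_sqrt zero_le_two]
        ring_nf

/-- The quantum discrimination risk for coherent states `|±u⟩` is strictly smaller
than the classical risk `1/2 − erf(u)` of the optimal test on `N(±u, 1/2)`. -/
theorem quantum_beats_classical_discrimination (u : ℝ) (hu : 0 < u) :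
    (1 - Real.sqrt (1 - Real.exp (-4 * u ^ 2))) / 2
      < 1 / 2 - ∫ t in (0:ℝ)..u, Real.exp (-t ^ 2) / Real.sqrt Real.pi := by
  rw [intervalIntegral.integral_div]
  set J := ∫ t in (0 : ℝ)..u, exp (-t ^ 2)
  have hJ : 0 ≤ J := intervalIntegral.integral_nonneg hu.le fun t _ => (exp_pos _).le
  have hexp : exp (-4 * u ^ 2) < exp (-2 * u ^ 2) := exp_lt_exp.2 (by nlinarith)
  have hsq : (2 * J / √π) ^ 2 < 1 - exp (-4 * u ^ 2) := by
    rw [div_pow, sq_sqrt pi_pos.le, div_lt_iff₀ pi_pos]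
    nlinarith [sq_integral_exp_neg_sq_le hu.le, pi_pos]
  have hlt : 2 * J / √π < √(1 - exp (-4 * u ^ 2)) := (lt_sqrt (by positivity)).2 hsq
  rw [mul_div_assoc] at hlt
  linarith
end

section
/- The weights p_n(j) in the Clebsch–Gordan decomposition of ρ^{⊗n} form a probability distribution: Σ_j p_n(j) = 1, where p_n(j) = (n_j/(2μ−1)) (1−μ)^{n/2−j} μ^{n/2+j+1} (1 − ((1−μ)/μ)^{2j+1}), with n_j = C(n, n/2−j) − C(n, n/2−j−1), summed over j = n/2 − k for k = 0,...,⌊n/2⌋. -/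
/-!
Write `x = μ`, `y = 1 - μ`. By the geometric sum, the weight of the block `k` is
`n_k (x y)^k (x^(n-2k+1) - y^(n-2k+1)) / (x - y) = n_k ∑_{m=k}^{n-k} x^m y^(n-m)`,
the dimension count of a spin-`(n/2 - k)` block. Collecting the coefficient of `x^m y^(n-m)`,
the multiplicities `n_k = C(n,k) - C(n,k-1)` telescope to `C(n, min m (n-m)) = C(n,m)`,
so the total is `(x + y)^n = 1`.
-/

open Finset

section CommRing

variable {R : Type*} [CommRing R]

theorem sum_range_choose_sub_choose_pred (n K : ℕ) :
    ∑ k ∈ range (K + 1), ((n.choose k : R) - if k = 0 then 0 else (n.choose (k - 1) : R)) =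
      n.choose K := by
  induction K with
  | zero => simp
  | succ K ih => rw [sum_range_succ, ih]; simp

theorem sum_choose_sub_choose_pred_mul_sum_Icc (n : ℕ) (f : ℕ → R) :
    ∑ k ∈ range (n / 2 + 1),
        ((n.choose k : R) - if k = 0 then 0 else (n.choose (k - 1) : R)) *
          ∑ m ∈ Icc k (n - k), f m =
      ∑ m ∈ range (n + 1), (n.choose m : R) * f m := by
  simp_rw [mul_sum]
  rw [sum_comm' (t' := range (n + 1)) (s' := fun m => range (min m (n - m) + 1))
    (fun k m => by simp only [mem_range, mem_Icc]; omega)]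
  refine sum_congr rfl fun m hm => ?_
  rw [← sum_mul, sum_range_choose_sub_choose_pred]
  have hmn : m ≤ n := Nat.lt_succ_iff.mp (mem_range.mp hm)
  rcases le_total m (n - m) with h | h
  · rw [min_eq_left h]
  · rw [min_eq_right h, Nat.choose_symm hmn]

theorem sum_Icc_pow_mul_pow_mul_sub (x y : R) {k n : ℕ} (h : 2 * k ≤ n) :
    (∑ m ∈ Icc k (n - k), x ^ m * y ^ (n - m)) * (x - y) =
      (x * y) ^ k * (x ^ (n - 2 * k + 1) - y ^ (n - 2 * k + 1)) := by
  obtain ⟨d, rfl⟩ := Nat.exists_eq_add_of_le h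
  have hshift : ∑ m ∈ Icc k (2 * k + d - k), x ^ m * y ^ (2 * k + d - m) =
      (x * y) ^ k * ∑ i ∈ range (d + 1), x ^ i * y ^ (d + 1 - 1 - i) := by
    rw [← Ico_add_one_right_eq_Icc, sum_Ico_eq_sum_range, mul_sum]
    refine sum_congr (by congr 1; omega) fun i hi => ?_
    have hi : i ≤ d := Nat.lt_succ_iff.mp (mem_range.mp hi)
    rw [show 2 * k + d - (k + i) = k + (d + 1 - 1 - i) by omega, pow_add, pow_add, mul_pow]
    ring
  rw [hshift, mul_assoc, geom_sum₂_mul, Nat.add_sub_cancel_left]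

end CommRing

theorem block_weight_eq_sum_Icc {K : Type*} [Field K] {x y : K} (hx : x ≠ 0) (hxy : x - y ≠ 0)
    {k n : ℕ} (h : 2 * k ≤ n) :
    y ^ k * x ^ (n - k + 1) * (1 - (y / x) ^ (n - 2 * k + 1)) / (x - y) =
      ∑ m ∈ Icc k (n - k), x ^ m * y ^ (n - m) := by
  rw [div_eq_iff hxy, sum_Icc_pow_mul_pow_mul_sub x y h, div_pow,
    show n - k + 1 = k + (n - 2 * k + 1) by omega, pow_add]
  field_simp
  ring

theorem block_weights_sum_to_one_general (n : ℕ) (μ : ℝ)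
    (hμ : μ ∈ Set.Ioo (1/2 : ℝ) 1) :
    ∑ k ∈ Finset.range (n / 2 + 1),
        (((n.choose k : ℝ) - (if k = 0 then 0 else (n.choose (k - 1) : ℝ))) / (2 * μ - 1))
          * (1 - μ) ^ k * μ ^ (n - k + 1) * (1 - ((1 - μ) / μ) ^ (n - 2 * k + 1))
      = 1 := by
  obtain ⟨hμ₁, -⟩ := hμ
  have hμ0 : μ ≠ 0 := by positivity
  have hgap : μ - (1 - μ) ≠ 0 := (by linarith : 0 < μ - (1 - μ)).ne'
  calc _ = ∑ k ∈ range (n / 2 + 1),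
          ((n.choose k : ℝ) - if k = 0 then 0 else (n.choose (k - 1) : ℝ)) *
            ∑ m ∈ Icc k (n - k), μ ^ m * (1 - μ) ^ (n - m) := by
        refine sum_congr rfl fun k hk => ?_
        have h2k : 2 * k ≤ n := by have := mem_range.mp hk; omega
        rw [← block_weight_eq_sum_Icc hμ0 hgap h2k, show 2 * μ - 1 = μ - (1 - μ) by ring]
        ring
    _ = ∑ m ∈ range (n + 1), (n.choose m : ℝ) * (μ ^ m * (1 - μ) ^ (n - m)) :=
        sum_choose_sub_choose_pred_mul_sum_Icc n _
    _ = (μ + (1 - μ)) ^ n := by rw [add_pow]; exact sum_congr rfl fun m _ => by ring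
    _ = 1 := by rw [add_sub_cancel, one_pow]

/-- The block weights `p_n(j)` (with `j = n/2 − k`) form a probability distribution:
`Σ_k p_n(n/2 − k) = 1`. -/
theorem block_weights_sum_to_one (n : ℕ) (hn : 1 ≤ n) (μ : ℝ)
    (hμ : μ ∈ Set.Ioo (1/2 : ℝ) 1) :
    ∑ k ∈ Finset.range (n / 2 + 1),
        (((n.choose k : ℝ) - (if k = 0 then 0 else (n.choose (k - 1) : ℝ))) / (2 * μ - 1))
          * (1 - μ) ^ k * μ ^ (n - k + 1) * (1 - ((1 - μ) / μ) ^ (n - 2 * k + 1))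
      = 1 :=
  block_weights_sum_to_one_general n μ hμ
end
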